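/- arXiv:1803.00733 — 5 statements merged into one kernel-verified Lean document; each statement's English description precedes it below -/
import Mathlib

section
/- Assume that ω ↦ log‖A₁(ω)‖ is integrable with E[log‖A₁‖] < 0, and that E[log⁺‖B₁‖] < ∞. Then the random series Σ_{k=0}^{∞} (A₁ A₂ ⋯ A_k) B_{k+1} converges absolutely in ℝ^q almost surely, i.e. almost surely Σ_{k=0}^{∞} ‖(A₁ ⋯ A_k) B_{k+1}‖ < ∞. -/
/-! By the strong law of large numbers, almost surely `(1/k) Σ_{i<k} log ‖A_{i+1}‖` tends to
`μ = E[log ‖A₁‖] < 0`, and, since the Cesàro means of `log⁺ ‖B_{k+1}‖` converge,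
`log⁺ ‖B_{k+1}‖ / k → 0`. The `k`-th term is at most `exp (Σ_{i<k} log ‖A_{i+1}‖ + log⁺ ‖B_{k+1}‖)`,
whose exponent is eventually below `k μ / 2`, so the series is dominated by a geometric one. -/

open MeasureTheory ProbabilityTheory Filter
open scoped NNReal Topology

/-- The ordered composition `A s ω ∘ A (s+1) ω ∘ ⋯ ∘ A (s+k-1) ω` of random continuous linear
maps on Euclidean space (the identity when `k = 0`). -/
noncomputable def fwdProd {Ω : Type*} {q : ℕ}
    (A : ℕ → Ω → (EuclideanSpace ℝ (Fin q) →L[ℝ] EuclideanSpace ℝ (Fin q)))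
    (s k : ℕ) (ω : Ω) : EuclideanSpace ℝ (Fin q) →L[ℝ] EuclideanSpace ℝ (Fin q) :=
  ((List.range k).map (fun i => A (s + i) ω)).prod

section FwdProd

variable {Ω : Type*} {q : ℕ}
  (A : ℕ → Ω → (EuclideanSpace ℝ (Fin q) →L[ℝ] EuclideanSpace ℝ (Fin q)))

lemma fwdProd_succ (s k : ℕ) (ω : Ω) :
    fwdProd A s (k + 1) ω = fwdProd A s k ω * A (s + k) ω := by
  simp [fwdProd, List.range_succ]

lemma norm_fwdProd_le (s k : ℕ) (ω : Ω) :
    ‖fwdProd A s k ω‖ ≤ ∏ i ∈ Finset.range k, ‖A (s + i) ω‖ := by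
  induction k with
  | zero =>
    rw [Finset.prod_range_zero]
    exact ContinuousLinearMap.norm_id_le
  | succ k ih =>
    rw [fwdProd_succ, Finset.prod_range_succ]
    exact (norm_mul_le _ _).trans (by gcongr)

lemma norm_fwdProd_apply_le_exp (s k : ℕ) (ω : Ω) (b : EuclideanSpace ℝ (Fin q)) :
    ‖fwdProd A s k ω b‖ ≤
      Real.exp (∑ i ∈ Finset.range k, Real.log ‖A (s + i) ω‖ + Real.log (max 1 ‖b‖)) := by
  rw [Real.exp_add, Real.exp_sum, Real.exp_log (lt_max_of_lt_left one_pos)]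
  calc ‖fwdProd A s k ω b‖
      ≤ (∏ i ∈ Finset.range k, ‖A (s + i) ω‖) * max 1 ‖b‖ :=
        (fwdProd A s k ω).le_of_opNorm_le_of_le (norm_fwdProd_le A s k ω)
          (le_max_right _ _)
    _ ≤ (∏ i ∈ Finset.range k, Real.exp (Real.log ‖A (s + i) ω‖)) * max 1 ‖b‖ := by
        gcongr with i
        exact Real.le_exp_log _

end FwdProd

lemma tendsto_div_of_tendsto_sum_range_div {y : ℕ → ℝ} {ν : ℝ}
    (h : Tendsto (fun n : ℕ => (∑ i ∈ Finset.range n, y i) / n) atTop (𝓝 ν)) :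
    Tendsto (fun n : ℕ => y n / n) atTop (𝓝 0) := by
  have h_succ_div : Tendsto (fun n : ℕ => ((n : ℝ) + 1) / n) atTop (𝓝 1) := by
    simpa using (tendsto_add_mul_div_add_mul_atTop_nhds (1 : ℝ) 0 1 one_ne_zero).congr
      fun n => by ring_nf
  have h_shift :
      Tendsto (fun n : ℕ => (∑ i ∈ Finset.range (n + 1), y i) / n) atTop (𝓝 ν) := by
    refine (mul_one ν ▸ ((tendsto_add_atTop_iff_nat 1).2 h).mul h_succ_div).congr' ?_
    filter_upwards [eventually_ne_atTop 0] with n hn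
    have : (n : ℝ) ≠ 0 := Nat.cast_ne_zero.2 hn
    push_cast
    field_simp
  refine (sub_self ν ▸ h_shift.sub h).congr fun n => ?_
  rw [← sub_div, Finset.sum_range_succ, add_sub_cancel_left]

lemma summable_exp_of_tendsto_div_neg {c : ℕ → ℝ} {μ : ℝ}
    (hc : Tendsto (fun k : ℕ => c k / k) atTop (𝓝 μ)) (hμ : μ < 0) :
    Summable (fun k => Real.exp (c k)) := by
  have h_geom : Summable (fun k : ℕ => Real.exp (μ / 2) ^ k) :=
    summable_geometric_of_lt_one (Real.exp_nonneg _) (Real.exp_lt_one_iff.2 (by linarith))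
  refine h_geom.of_norm_bounded_eventually_nat ?_
  filter_upwards [hc.eventually_lt_const (by linarith : μ < μ / 2), eventually_gt_atTop 0]
    with k hk hk_pos
  rw [Real.norm_eq_abs, abs_of_pos (Real.exp_pos _), ← Real.exp_nat_mul, mul_comm]
  exact Real.exp_le_exp.2 ((div_lt_iff₀ (Nat.cast_pos.2 hk_pos)).1 hk).le

theorem strong_law_ae_comp {Ω E : Type*} {mΩ : MeasurableSpace Ω} {μ : Measure Ω}
    [MeasurableSpace E] {Z : ℕ → Ω → E} (hindep : iIndepFun Z μ)
    (hident : ∀ i, IdentDistrib (Z i) (Z 0) μ μ) {g : E → ℝ} (hg : Measurable g)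
    (hint : Integrable (g ∘ Z 0) μ) :
    ∀ᵐ ω ∂μ, Tendsto (fun n : ℕ => (∑ i ∈ Finset.range n, g (Z i ω)) / n) atTop
      (𝓝 (μ[g ∘ Z 0])) :=
  strong_law_ae_real (fun i => g ∘ Z i) hint
    (fun _ _ hij => (hindep.comp (fun _ => g) (fun _ => hg)).indepFun hij)
    (fun i => (hident i).comp hg)

theorem backward_series_abs_convergent_general
    {Ω : Type*} [MeasureSpace Ω]
    {q : ℕ}
    [MeasurableSpace (EuclideanSpace ℝ (Fin q) →L[ℝ] EuclideanSpace ℝ (Fin q))]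
    [BorelSpace (EuclideanSpace ℝ (Fin q) →L[ℝ] EuclideanSpace ℝ (Fin q))]
    (A : ℕ → Ω → (EuclideanSpace ℝ (Fin q) →L[ℝ] EuclideanSpace ℝ (Fin q)))
    (B : ℕ → Ω → EuclideanSpace ℝ (Fin q))
    (hiid : iIndepFun
      (fun (k : ℕ) ω => (A (k + 1) ω, B (k + 1) ω)) ℙ)
    (hident : ∀ k : ℕ, IdentDistrib (fun ω => (A (k + 1) ω, B (k + 1) ω))
      (fun ω => (A 1 ω, B 1 ω)) ℙ ℙ)
    (hlogA_int : Integrable (fun ω => Real.log ‖A 1 ω‖) ℙ)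
    (hlogA_neg : ∫ ω, Real.log ‖A 1 ω‖ ∂ℙ < 0)
    (hlogB_int : Integrable (fun ω => Real.log (max 1 ‖B 1 ω‖)) ℙ) :
    ∀ᵐ ω ∂ℙ, Summable (fun k : ℕ => ‖(fwdProd A 1 k ω) (B (k + 1) ω)‖) := by
  have h_logA : Measurable fun p : (EuclideanSpace ℝ (Fin q) →L[ℝ] EuclideanSpace ℝ (Fin q)) ×
      EuclideanSpace ℝ (Fin q) => Real.log ‖p.1‖ := by fun_prop
  have h_logB : Measurable fun p : (EuclideanSpace ℝ (Fin q) →L[ℝ] EuclideanSpace ℝ (Fin q)) ×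
      EuclideanSpace ℝ (Fin q) => Real.log (max 1 ‖p.2‖) := by fun_prop
  filter_upwards [strong_law_ae_comp hiid hident h_logA hlogA_int,
    strong_law_ae_comp hiid hident h_logB hlogB_int] with ω hA hB
  have h_exponent := hA.add (tendsto_div_of_tendsto_sum_range_div hB)
  rw [add_zero] at h_exponent
  refine .of_nonneg_of_le (fun _ => norm_nonneg _) (fun k => ?_)
    (summable_exp_of_tendsto_div_neg (h_exponent.congr fun k => (add_div _ _ _).symm) hlogA_neg)
  simpa only [add_comm 1] using norm_fwdProd_apply_le_exp A 1 k ω (B (k + 1) ω)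

/-- Almost sure absolute convergence of the backward series
`Σ_{k≥0} (A₁ ⋯ A_k) B_{k+1}` for an i.i.d. sequence `((A_k, B_k))_{k≥1}` of random matrices
and vectors under the negative-drift condition `E[log ‖A₁‖] < 0` and `E[log⁺ ‖B₁‖] < ∞`. -/
theorem backward_series_abs_convergent
    {Ω : Type*} [MeasureSpace Ω] [IsProbabilityMeasure (ℙ : Measure Ω)]
    {q : ℕ} (hq : 1 ≤ q)
    [MeasurableSpace (EuclideanSpace ℝ (Fin q) →L[ℝ] EuclideanSpace ℝ (Fin q))]
    [BorelSpace (EuclideanSpace ℝ (Fin q) →L[ℝ] EuclideanSpace ℝ (Fin q))]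
    (A : ℕ → Ω → (EuclideanSpace ℝ (Fin q) →L[ℝ] EuclideanSpace ℝ (Fin q)))
    (B : ℕ → Ω → EuclideanSpace ℝ (Fin q))
    (hAmeas : ∀ k : ℕ, Measurable (A (k + 1)))
    (hBmeas : ∀ k : ℕ, Measurable (B (k + 1)))
    (hiid : iIndepFun
      (fun (k : ℕ) ω => (A (k + 1) ω, B (k + 1) ω)) ℙ)
    (hident : ∀ k : ℕ, IdentDistrib (fun ω => (A (k + 1) ω, B (k + 1) ω))
      (fun ω => (A 1 ω, B 1 ω)) ℙ ℙ)
    (hlogA_int : Integrable (fun ω => Real.log ‖A 1 ω‖) ℙ)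
    (hlogA_neg : ∫ ω, Real.log ‖A 1 ω‖ ∂ℙ < 0)
    (hlogB_int : Integrable (fun ω => Real.log (max 1 ‖B 1 ω‖)) ℙ) :
    ∀ᵐ ω ∂ℙ, Summable (fun k : ℕ => ‖(fwdProd A 1 k ω) (B (k + 1) ω)‖) :=
  backward_series_abs_convergent_general A B hiid hident hlogA_int hlogA_neg hlogB_int
end

section
/- Assume that ω ↦ log‖A₁(ω)‖ is integrable with E[log‖A₁‖] < 0, and that E[log⁺‖B₁‖] < ∞. Define U := Σ_{k=0}^{∞} (A₁ ⋯ A_k) B_{k+1} and U' := Σ_{k=0}^{∞} (A₂ ⋯ A_{k+1}) B_{k+2} (both series converge absolutely almost surely). Then: (i) U = A₁ U' + B₁ almost surely; (ii) U' is independent of the pair (A₁, B₁); and (iii) U' has the same distribution as U. Consequently the law of U solves the distributional fixed-point equation U ≟ A₁ U + B₁ in which the U on the right-hand side is independent of (A₁, B₁). -/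
open MeasureTheory ProbabilityTheory Filter
open scoped NNReal Topology

/-!
By the strong law of large numbers, almost surely `(1/n) ∑_{i<n} log ‖A_i‖ → E log ‖A₁‖ < 0`
and `log⁺ ‖B_n‖ / n → 0`, so the terms of both series decay geometrically. Splitting off the
first term of `U` gives `U = A₁ U' + B₁`. Moreover `U` and `U'` are one and the same measurable
function of the i.i.d. sequence `(A_k, B_k)` and of its shift respectively; the shift is
independent of `(A₁, B₁)` and has the same (product) law as the sequence itself.
-/

theorem tendsto_inv_mul_zero_of_cesaro {y : ℕ → ℝ} {c : ℝ}
    (h : Tendsto (fun n : ℕ => (n : ℝ)⁻¹ * ∑ i ∈ Finset.range n, y i) atTop (𝓝 c)) :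
    Tendsto (fun n : ℕ => (n : ℝ)⁻¹ * y n) atTop (𝓝 0) := by
  have h_succ : Tendsto (fun n : ℕ => (1 + (n : ℝ)⁻¹) *
      (((n + 1 : ℕ) : ℝ)⁻¹ * ∑ i ∈ Finset.range (n + 1), y i)) atTop (𝓝 ((1 + 0) * c)) :=
    (tendsto_const_nhds.add tendsto_inv_atTop_nhds_zero_nat).mul
      (h.comp (tendsto_add_atTop_nat 1))
  rw [show (0 : ℝ) = (1 + 0) * c - c by ring]
  refine (h_succ.sub h).congr' ?_
  filter_upwards [eventually_ge_atTop 1] with n hn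
  have hn0 : (n : ℝ) ≠ 0 := by positivity
  rw [Finset.sum_range_succ]
  push_cast
  field_simp
  ring

theorem summable_exp_sum_add_of_cesaro {x y : ℕ → ℝ} {ℓ c : ℝ} (hℓ : ℓ < 0)
    (hx : Tendsto (fun n : ℕ => (n : ℝ)⁻¹ * ∑ i ∈ Finset.range n, x i) atTop (𝓝 ℓ))
    (hy : Tendsto (fun n : ℕ => (n : ℝ)⁻¹ * ∑ i ∈ Finset.range n, y i) atTop (𝓝 c)) :
    Summable (fun k => Real.exp (∑ i ∈ Finset.range k, x i + y k)) := by
  have hlim : Tendsto (fun n : ℕ => (n : ℝ)⁻¹ * (∑ i ∈ Finset.range n, x i + y n)) atTop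
      (𝓝 (ℓ + 0)) := by
    simpa only [mul_add] using hx.add (tendsto_inv_mul_zero_of_cesaro hy)
  have hev : ∀ᶠ n : ℕ in atTop, ∑ i ∈ Finset.range n, x i + y n < n * (ℓ / 2) := by
    filter_upwards [(tendsto_order.1 hlim).2 (ℓ / 2) (by linarith), eventually_ge_atTop 1]
      with n hn hn1
    exact (inv_mul_lt_iff₀ (by exact_mod_cast hn1)).1 hn
  refine Summable.of_norm_bounded_eventually_nat (g := fun n => Real.exp (ℓ / 2) ^ n)
    (summable_geometric_of_lt_one (Real.exp_pos _).le (Real.exp_lt_one_iff.2 (by linarith))) ?_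
  filter_upwards [hev] with n hn
  rw [Real.norm_of_nonneg (Real.exp_pos _).le, ← Real.exp_nat_mul]
  exact Real.exp_le_exp.2 hn.le

section Perpetuity

variable {𝕜 E : Type*} [NontriviallyNormedField 𝕜] [NormedAddCommGroup E] [NormedSpace 𝕜 E]

noncomputable def perpetuityTerm (x : ℕ → (E →L[𝕜] E) × E) (k : ℕ) : E :=
  ((List.range k).map fun i => (x i).1).prod (x k).2

/-- Named after Vervaat's perpetuities `∑ₖ a₀ ⋯ a_{k-1} b_k` of random difference equations. -/
noncomputable def perpetuity (x : ℕ → (E →L[𝕜] E) × E) : E :=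
  ∑' k, perpetuityTerm x k

@[simp]
theorem perpetuityTerm_zero (x : ℕ → (E →L[𝕜] E) × E) : perpetuityTerm x 0 = (x 0).2 := by
  simp [perpetuityTerm]

theorem perpetuityTerm_succ (x : ℕ → (E →L[𝕜] E) × E) (k : ℕ) :
    perpetuityTerm x (k + 1) = (x 0).1 (perpetuityTerm (fun n => x (n + 1)) k) := by
  simp [perpetuityTerm, List.range_succ_eq_map, List.map_map, Function.comp_def]

theorem perpetuity_eq_apply_add {x : ℕ → (E →L[𝕜] E) × E}
    (h : Summable (perpetuityTerm fun n => x (n + 1))) :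
    perpetuity x = (x 0).1 (perpetuity fun n => x (n + 1)) + (x 0).2 := by
  have hx : Summable (perpetuityTerm x) := by
    rw [← summable_nat_add_iff 1]
    simpa only [perpetuityTerm_succ] using h.mapL (x 0).1
  rw [perpetuity, hx.tsum_eq_zero_add, perpetuity, (x 0).1.map_tsum h, add_comm]
  simp only [perpetuityTerm_zero, perpetuityTerm_succ]

theorem norm_list_prod_map_range_le (a : ℕ → E →L[𝕜] E) (k : ℕ) :
    ‖((List.range k).map a).prod‖ ≤ Real.exp (∑ i ∈ Finset.range k, Real.log ‖a i‖) := by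
  induction k with
  | zero =>
    simpa [← ContinuousLinearMap.one_def] using ContinuousLinearMap.norm_id_le (𝕜 := 𝕜) (E := E)
  | succ k ih =>
    rw [List.range_succ, List.map_append, List.prod_append, Finset.sum_range_succ, Real.exp_add]
    simp only [List.map_cons, List.map_nil, List.prod_cons, List.prod_nil, mul_one]
    exact (norm_mul_le _ _).trans
      (mul_le_mul ih (Real.le_exp_log _) (norm_nonneg _) (Real.exp_nonneg _))

theorem norm_perpetuityTerm_le (x : ℕ → (E →L[𝕜] E) × E) (k : ℕ) :
    ‖perpetuityTerm x k‖ ≤ Real.exp (∑ i ∈ Finset.range k, Real.log ‖(x i).1‖ +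
      Real.log (max 1 ‖(x k).2‖)) := by
  rw [Real.exp_add]
  calc ‖perpetuityTerm x k‖ ≤ ‖((List.range k).map fun i => (x i).1).prod‖ * ‖(x k).2‖ :=
        ContinuousLinearMap.le_opNorm _ _
    _ ≤ _ := mul_le_mul (norm_list_prod_map_range_le _ k)
        ((le_max_right 1 _).trans (Real.le_exp_log _)) (norm_nonneg _) (Real.exp_nonneg _)

end Perpetuity

section Measurability

variable {𝕜 E : Type*} [NontriviallyNormedField 𝕜] [NormedAddCommGroup E] [NormedSpace 𝕜 E]
  [MeasurableSpace E] [BorelSpace E] [SecondCountableTopology E]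
  [MeasurableSpace (E →L[𝕜] E)] [BorelSpace (E →L[𝕜] E)] [SecondCountableTopology (E →L[𝕜] E)]

theorem measurable_perpetuityTerm (k : ℕ) :
    Measurable fun x : ℕ → (E →L[𝕜] E) × E => perpetuityTerm x k := by
  have hprod : Measurable fun x : ℕ → (E →L[𝕜] E) × E =>
      ((List.range k).map fun i => (x i).1).prod := by
    simpa only [List.map_map, Function.comp_def] using
      List.measurable_fun_prod ((List.range k).map fun i (x : ℕ → (E →L[𝕜] E) × E) => (x i).1)
        (by simp only [List.mem_map]; rintro _ ⟨i, -, rfl⟩; fun_prop)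
  exact isBoundedBilinearMap_apply.continuous.measurable.comp (hprod.prodMk (by fun_prop))

theorem measurable_perpetuity [CompleteSpace E] :
    Measurable fun x : ℕ → (E →L[𝕜] E) × E => perpetuity x :=
  Measurable.tsum measurable_perpetuityTerm

end Measurability

section AlmostSureSummability

variable {Ω 𝕜 E : Type*} [MeasurableSpace Ω] {P : Measure Ω}
  [NontriviallyNormedField 𝕜] [NormedAddCommGroup E] [NormedSpace 𝕜 E] [MeasurableSpace E]
  [OpensMeasurableSpace E] [MeasurableSpace (E →L[𝕜] E)] [OpensMeasurableSpace (E →L[𝕜] E)]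

theorem ae_summable_norm_perpetuityTerm
    {f : ℕ → Ω → (E →L[𝕜] E) × E} {g : Ω → (E →L[𝕜] E) × E}
    (hindep : Pairwise fun i j => IndepFun (f i) (f j) P)
    (hident : ∀ n, IdentDistrib (f n) g P P)
    (hlogA : Integrable (fun ω => Real.log ‖(g ω).1‖) P)
    (hlogA_neg : ∫ ω, Real.log ‖(g ω).1‖ ∂P < 0)
    (hlogB : Integrable (fun ω => Real.log (max 1 ‖(g ω).2‖)) P) :
    ∀ᵐ ω ∂P, Summable fun k => ‖perpetuityTerm (fun n => f n ω) k‖ := by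
  have slln : ∀ φ : (E →L[𝕜] E) × E → ℝ, Measurable φ → Integrable (fun ω => φ (g ω)) P →
      ∀ᵐ ω ∂P, Tendsto (fun n : ℕ => (n : ℝ)⁻¹ * ∑ i ∈ Finset.range n, φ (f i ω)) atTop
        (𝓝 (∫ ω, φ (g ω) ∂P)) := by
    intro φ hφ hint
    have hident' : ∀ n, IdentDistrib (φ ∘ f n) (φ ∘ g) P P := fun n => (hident n).comp hφ
    filter_upwards [strong_law_ae (fun n => φ ∘ f n) ((hident' 0).integrable_iff.2 hint)
      (fun i j hij => (hindep hij).comp hφ hφ)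
      (fun n => (hident' n).trans (hident' 0).symm)] with ω hω
    rw [show ∫ ω, φ (g ω) ∂P = ∫ ω, (φ ∘ f 0) ω ∂P from (hident' 0).integral_eq.symm]
    simpa only [smul_eq_mul, Function.comp_apply] using hω
  filter_upwards [slln (fun p => Real.log ‖p.1‖) (by fun_prop) hlogA,
    slln (fun p => Real.log (max 1 ‖p.2‖)) (by fun_prop) hlogB] with ω hA hB
  exact (summable_exp_sum_add_of_cesaro hlogA_neg hA hB).of_nonneg_of_le (fun _ => norm_nonneg _)
    (norm_perpetuityTerm_le _)

end AlmostSureSummability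

namespace ProbabilityTheory

variable {Ω α : Type*} [MeasurableSpace Ω] [MeasurableSpace α] {P : Measure Ω}
  {f : ℕ → Ω → α}

theorem iIndepFun.indepFun_shift (hf : ∀ n, Measurable (f n)) (h : iIndepFun f P) :
    IndepFun (fun ω n => f (n + 1) ω) (f 0) P := by
  have := h.isProbabilityMeasure
  refine IndepFun.process_indepFun (fun n => hf (n + 1)) (hf 0) fun I => ?_
  have hdisj : Disjoint (I.map (addRightEmbedding 1)) {0} := by simp
  have hblock := h.indepFun_finset _ _ hdisj hf
  have hφ : Measurable fun (y : I.map (addRightEmbedding 1) → α) (i : I) =>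
      y ⟨i + 1, Finset.mem_map_of_mem _ i.2⟩ := by fun_prop
  have hψ : Measurable fun (y : ({0} : Finset ℕ) → α) => y ⟨0, Finset.mem_singleton_self 0⟩ :=
    measurable_pi_apply _
  exact hblock.comp hφ hψ

theorem iIndepFun.identDistrib_shift (hf : ∀ n, Measurable (f n)) (h : iIndepFun f P)
    (hident : ∀ n, IdentDistrib (f n) (f 0) P P) :
    IdentDistrib (fun ω n => f (n + 1) ω) (fun ω n => f n ω) P P := by
  refine ⟨by fun_prop, by fun_prop, ?_⟩
  have hmarg : ∀ n, P.map (f n) = P.map (f 0) := fun n => (hident n).map_eq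
  rw [(h.precomp Nat.succ_injective).map_fun_eq_infinitePi_map (fun n => hf (n + 1)),
    h.map_fun_eq_infinitePi_map hf]
  simp only [hmarg]

end ProbabilityTheory

theorem fwdProd_eq_list_prod {Ω : Type*} {q : ℕ}
    (A : ℕ → Ω → (EuclideanSpace ℝ (Fin q) →L[ℝ] EuclideanSpace ℝ (Fin q))) (s k : ℕ) (ω : Ω) :
    fwdProd A s k ω = ((List.range k).map fun i => A (i + s) ω).prod := by
  simp only [fwdProd, Nat.add_comm s]

theorem backward_series_fixed_point_general
    {Ω : Type*} [MeasureSpace Ω]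
    {q : ℕ}
    [MeasurableSpace (EuclideanSpace ℝ (Fin q) →L[ℝ] EuclideanSpace ℝ (Fin q))]
    [BorelSpace (EuclideanSpace ℝ (Fin q) →L[ℝ] EuclideanSpace ℝ (Fin q))]
    (A : ℕ → Ω → (EuclideanSpace ℝ (Fin q) →L[ℝ] EuclideanSpace ℝ (Fin q)))
    (B : ℕ → Ω → EuclideanSpace ℝ (Fin q))
    (hAmeas : ∀ k : ℕ, Measurable (A (k + 1)))
    (hBmeas : ∀ k : ℕ, Measurable (B (k + 1)))
    (hiid : iIndepFun
      (fun (k : ℕ) ω => (A (k + 1) ω, B (k + 1) ω)) ℙ)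
    (hident : ∀ k : ℕ, IdentDistrib (fun ω => (A (k + 1) ω, B (k + 1) ω))
      (fun ω => (A 1 ω, B 1 ω)) ℙ ℙ)
    (hlogA_int : Integrable (fun ω => Real.log ‖A 1 ω‖) ℙ)
    (hlogA_neg : ∫ ω, Real.log ‖A 1 ω‖ ∂ℙ < 0)
    (hlogB_int : Integrable (fun ω => Real.log (max 1 ‖B 1 ω‖)) ℙ)
    (U U' : Ω → EuclideanSpace ℝ (Fin q))
    (hU : U = fun ω => ∑' k : ℕ, (fwdProd A 1 k ω) (B (k + 1) ω))
    (hU' : U' = fun ω => ∑' k : ℕ, (fwdProd A 2 k ω) (B (k + 2) ω)) :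
    (∀ᵐ ω ∂ℙ, U ω = A 1 ω (U' ω) + B 1 ω) ∧
      IndepFun U' (fun ω => (A 1 ω, B 1 ω)) ℙ ∧
      IdentDistrib U' U ℙ ℙ := by
  set X := fun (n : ℕ) ω => (A (n + 1) ω, B (n + 1) ω)
  have hX_meas : ∀ n, Measurable (X n) := fun n => (hAmeas n).prodMk (hBmeas n)
  have hU_eq : U = fun ω => perpetuity fun n => X n ω := by
    simp only [hU, fwdProd_eq_list_prod]; rfl
  have hU'_eq : U' = fun ω => perpetuity fun n => X (n + 1) ω := by
    simp only [hU', fwdProd_eq_list_prod]; rfl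
  refine ⟨?_, ?_, ?_⟩
  · have hsummable := ae_summable_norm_perpetuityTerm (f := fun n => X (n + 1)) (g := X 0)
      (fun i j hij => hiid.indepFun (by simpa using hij)) (fun n => hident (n + 1))
      hlogA_int hlogA_neg hlogB_int
    filter_upwards [hsummable] with ω hω
    rw [hU_eq, hU'_eq]
    exact perpetuity_eq_apply_add hω.of_norm
  · rw [hU'_eq]
    exact (hiid.indepFun_shift hX_meas).comp measurable_perpetuity measurable_id
  · rw [hU_eq, hU'_eq]
    exact (hiid.identDistrib_shift hX_meas hident).comp measurable_perpetuity

/-- The backward series `U = Σ_k (A₁ ⋯ A_k) B_{k+1}` and its shift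
`U' = Σ_k (A₂ ⋯ A_{k+1}) B_{k+2}` satisfy, almost surely, `U = A₁ U' + B₁`; moreover `U'` is
independent of `(A₁, B₁)` and has the same distribution as `U`.  Consequently the law of `U`
solves the random fixed-point equation `U ≟ A₁ U + B₁`. -/
theorem backward_series_fixed_point
    {Ω : Type*} [MeasureSpace Ω] [IsProbabilityMeasure (ℙ : Measure Ω)]
    {q : ℕ} (hq : 1 ≤ q)
    [MeasurableSpace (EuclideanSpace ℝ (Fin q) →L[ℝ] EuclideanSpace ℝ (Fin q))]
    [BorelSpace (EuclideanSpace ℝ (Fin q) →L[ℝ] EuclideanSpace ℝ (Fin q))]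
    (A : ℕ → Ω → (EuclideanSpace ℝ (Fin q) →L[ℝ] EuclideanSpace ℝ (Fin q)))
    (B : ℕ → Ω → EuclideanSpace ℝ (Fin q))
    (hAmeas : ∀ k : ℕ, Measurable (A (k + 1)))
    (hBmeas : ∀ k : ℕ, Measurable (B (k + 1)))
    (hiid : iIndepFun
      (fun (k : ℕ) ω => (A (k + 1) ω, B (k + 1) ω)) ℙ)
    (hident : ∀ k : ℕ, IdentDistrib (fun ω => (A (k + 1) ω, B (k + 1) ω))
      (fun ω => (A 1 ω, B 1 ω)) ℙ ℙ)
    (hlogA_int : Integrable (fun ω => Real.log ‖A 1 ω‖) ℙ)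
    (hlogA_neg : ∫ ω, Real.log ‖A 1 ω‖ ∂ℙ < 0)
    (hlogB_int : Integrable (fun ω => Real.log (max 1 ‖B 1 ω‖)) ℙ)
    (U U' : Ω → EuclideanSpace ℝ (Fin q))
    (hU : U = fun ω => ∑' k : ℕ, (fwdProd A 1 k ω) (B (k + 1) ω))
    (hU' : U' = fun ω => ∑' k : ℕ, (fwdProd A 2 k ω) (B (k + 2) ω)) :
    (∀ᵐ ω ∂ℙ, U ω = A 1 ω (U' ω) + B 1 ω) ∧
      IndepFun U' (fun ω => (A 1 ω, B 1 ω)) ℙ ∧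
      IdentDistrib U' U ℙ ℙ :=
  backward_series_fixed_point_general A B hAmeas hBmeas hiid hident hlogA_int hlogA_neg hlogB_int U
    U' hU hU'
end

section
/- Assume that ω ↦ log‖A₁(ω)‖ is integrable with E[log‖A₁‖] < 0, and that E[log⁺‖B₁‖] < ∞. Then there is at most one Borel probability measure μ on ℝ^q with the following property: whenever U is a random vector with distribution μ that is independent of the pair (A₁, B₁), the random vector A₁ U + B₁ also has distribution μ. -/
universe u

open MeasureTheory ProbabilityTheory Filter
open scoped Topology

/-!
Couple two solutions through the forward recursion `Uₙ₊₁ = Aₙ₊₁ Uₙ + Bₙ₊₁`: on `Ω × ℝ^q × ℝ^q`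
with law `ℙ ⊗ μ ⊗ ν`, run it from a `μ`-distributed and from a `ν`-distributed starting point, both
independent of the innovations `(Aₖ, Bₖ)`. Each state is independent of the next innovation, so the
fixed-point property keeps the laws of the two orbits equal to `μ` and `ν` for every `n`. The
distance between the orbits is at most `‖A₁‖ ⋯ ‖Aₙ‖` times the initial distance, and the strong
law of large numbers gives `∑ₖ log ‖Aₖ‖ → -∞` almost surely, so the orbits merge. Two sequences
with constant laws whose distance tends to `0` almost surely have the same law.
-/

lemma tendsto_prod_zero_of_tendsto_sum_log_atBot {y : ℕ → ℝ} (hy : ∀ i, 0 ≤ y i)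
    (h : Tendsto (fun n => ∑ i ∈ Finset.range n, Real.log (y i)) atTop atBot) :
    Tendsto (fun n => ∏ i ∈ Finset.range n, y i) atTop (𝓝 0) := by
  refine tendsto_of_tendsto_of_tendsto_of_le_of_le tendsto_const_nhds
    (Real.tendsto_exp_atBot.comp h) (fun n => Finset.prod_nonneg fun i _ => hy i) fun n => ?_
  calc ∏ i ∈ Finset.range n, y i ≤ ∏ i ∈ Finset.range n, Real.exp (Real.log (y i)) :=
        Finset.prod_le_prod (fun i _ => hy i) fun i _ => Real.le_exp_log _
    _ = Real.exp (∑ i ∈ Finset.range n, Real.log (y i)) := (Real.exp_sum _ _).symm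

namespace ProbabilityTheory

variable {Ω Ω' α β γ : Type*} [MeasurableSpace Ω] [MeasurableSpace Ω'] [MeasurableSpace α]
  [MeasurableSpace β] [MeasurableSpace γ] {P : Measure Ω} {P' : Measure Ω'}

lemma IndepFun.comp_measurePreserving {π : Ω' → Ω} {f : Ω → α} {g : Ω → β}
    (h : IndepFun f g P) (hπ : MeasurePreserving π P' P) (hf : Measurable f)
    (hg : Measurable g) : IndepFun (f ∘ π) (g ∘ π) P' := by
  rw [indepFun_iff_measure_inter_preimage_eq_mul] at h ⊢
  intro s t hs ht
  simp only [Set.preimage_comp, ← Set.preimage_inter]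
  rw [hπ.measure_preimage ((hf hs).inter (hg ht)).nullMeasurableSet,
    hπ.measure_preimage (hf hs).nullMeasurableSet, hπ.measure_preimage (hg ht).nullMeasurableSet,
    h s t hs ht]

lemma _root_.MeasureTheory.MeasurePreserving.identDistrib_comp {π : Ω' → Ω} {f : Ω → γ}
    (hπ : MeasurePreserving π P' P) (hf : Measurable f) : IdentDistrib (f ∘ π) f P' P :=
  ⟨(hf.comp hπ.measurable).aemeasurable, hf.aemeasurable,
    by rw [← Measure.map_map hf hπ.measurable, hπ.map_eq]⟩

lemma IndepFun.prodMk_indepFun [IsProbabilityMeasure P] {U : Ω → α} {X : Ω → β} {Z : Ω → γ}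
    (hU : Measurable U) (hX : Measurable X) (hZ : Measurable Z)
    (hUXZ : IndepFun U (fun ω => (X ω, Z ω)) P) (hXZ : IndepFun X Z P) :
    IndepFun (fun ω => (U ω, X ω)) Z P := by
  have hUX : IndepFun U X P := hUXZ.comp measurable_id measurable_fst
  rw [indepFun_iff_map_prod_eq_prod_map_map hU.aemeasurable (hX.prodMk hZ).aemeasurable] at hUXZ
  rw [indepFun_iff_map_prod_eq_prod_map_map hX.aemeasurable hZ.aemeasurable] at hXZ
  rw [indepFun_iff_map_prod_eq_prod_map_map hU.aemeasurable hX.aemeasurable] at hUX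
  rw [indepFun_iff_map_prod_eq_prod_map_map (hU.prodMk hX).aemeasurable hZ.aemeasurable, hUX]
  have hassoc : (fun ω => ((U ω, X ω), Z ω)) =
      MeasurableEquiv.prodAssoc.symm ∘ fun ω => (U ω, (X ω, Z ω)) := rfl
  rw [hassoc, ← Measure.map_map MeasurableEquiv.prodAssoc.symm.measurable
    (hU.prodMk (hX.prodMk hZ)), hUXZ, hXZ]
  exact ((measurePreserving_prodAssoc _ _ _).symm MeasurableEquiv.prodAssoc).map_eq

lemma iIndepFun.indepFun_tail {f : ℕ → Ω → β} (h : iIndepFun f P) (hf : ∀ i, Measurable (f i))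
    (n : ℕ) : IndepFun (f n) (fun ω k => f (n + 1 + k) ω) P := by
  have hind := indep_iSup_of_disjoint (fun i => (hf i).comap_le) h.iIndep
    (Set.disjoint_singleton_left.2 (lt_irrefl n) : Disjoint {n} (Set.Ioi n))
  rw [IndepFun_iff_Indep]
  refine indep_of_indep_of_le hind (le_iSup₂_of_le n (Set.mem_singleton n) le_rfl) ?_
  simp only [MeasurableSpace.pi, MeasurableSpace.comap_iSup, MeasurableSpace.comap_comp]
  exact iSup_le fun k => le_iSup₂_of_le (n + 1 + k) (Set.mem_Ioi.2 (by omega)) le_rfl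

lemma ae_tendsto_sum_atBot_of_integral_neg [IsProbabilityMeasure P] {X : ℕ → Ω → ℝ}
    (hint : Integrable (X 0) P) (hindep : Pairwise fun i j => IndepFun (X i) (X j) P)
    (hident : ∀ i, IdentDistrib (X i) (X 0) P P) (hneg : P[X 0] < 0) :
    ∀ᵐ ω ∂P, Tendsto (fun n => ∑ i ∈ Finset.range n, X i ω) atTop atBot := by
  filter_upwards [strong_law_ae X hint hindep hident] with ω hω
  refine (tendsto_natCast_atTop_atTop.atTop_mul_neg hneg hω).congr' ?_
  filter_upwards [eventually_ne_atTop 0] with n hn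
  rw [smul_eq_mul, ← mul_assoc, mul_inv_cancel₀ (Nat.cast_ne_zero.2 hn), one_mul]

lemma ae_tendsto_prod_norm_zero_of_integral_log_neg {F : Type*} [SeminormedAddCommGroup F]
    [MeasurableSpace F] [OpensMeasurableSpace F] [IsProbabilityMeasure P] {M : ℕ → Ω → F}
    (hindep : Pairwise fun i j => IndepFun (M i) (M j) P)
    (hident : ∀ i, IdentDistrib (M i) (M 0) P P)
    (hint : Integrable (fun ω => Real.log ‖M 0 ω‖) P)
    (hneg : ∫ ω, Real.log ‖M 0 ω‖ ∂P < 0) :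
    ∀ᵐ ω ∂P, Tendsto (fun n => ∏ k ∈ Finset.range n, ‖M k ω‖) atTop (𝓝 0) := by
  have hlog : Measurable fun x : F => Real.log ‖x‖ := by fun_prop
  filter_upwards [ae_tendsto_sum_atBot_of_integral_neg (X := fun k ω => Real.log ‖M k ω‖) hint
    (fun i j hij => (hindep hij).comp hlog hlog) (fun i => (hident i).comp hlog) hneg] with ω hω
  exact tendsto_prod_zero_of_tendsto_sum_log_atBot (fun _ => norm_nonneg _) hω

end ProbabilityTheory

lemma MeasureTheory.eq_of_ae_tendsto_dist_zero {Ω E : Type*} [MeasurableSpace Ω]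
    {P : Measure Ω} [IsProbabilityMeasure P] [NormedAddCommGroup E] [SecondCountableTopology E]
    [MeasurableSpace E] [BorelSpace E] {X Y : ℕ → Ω → E} {ρ₁ ρ₂ : Measure E}
    (hX : ∀ n, Measurable (X n)) (hY : ∀ n, Measurable (Y n))
    (hXρ : ∀ n, P.map (X n) = ρ₁) (hYρ : ∀ n, P.map (Y n) = ρ₂)
    (h : ∀ᵐ ω ∂P, Tendsto (fun n => dist (X n ω) (Y n ω)) atTop (𝓝 0)) : ρ₁ = ρ₂ := by
  have hconst (Z : ℕ → Ω → E) (hZ : ∀ n, Measurable (Z n))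
      (hlaw : ∀ n, P.map (Z n) = P.map (Z 0)) :
      TendstoInDistribution Z atTop (Z 0) (fun _ => P) P :=
    tendstoInDistribution_of_identDistrib 0
      (fun j => ⟨(hZ 0).aemeasurable, (hZ j).aemeasurable, (hlaw j).symm⟩)
      (IdentDistrib.refl (hZ 0).aemeasurable)
  have hYX : TendstoInMeasure P (Y - X) atTop 0 := by
    refine tendstoInMeasure_of_tendsto_ae (fun n => ((hY n).sub (hX n)).aestronglyMeasurable) ?_
    filter_upwards [h] with ω hω
    simpa [tendsto_iff_norm_sub_tendsto_zero, dist_eq_norm, norm_sub_rev] using hω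
  have hYtoX := tendstoInDistribution_of_tendstoInMeasure_sub Y (X 0)
    (hconst X hX fun n => (hXρ n).trans (hXρ 0).symm) hYX fun n => (hY n).aemeasurable
  have hYtoY := hconst Y hY fun n => (hYρ n).trans (hYρ 0).symm
  rw [← hXρ 0, ← hYρ 0]
  exact tendstoInDistribution_unique Y hYtoX hYtoY

def randomIterate {Ω α β : Type*} (f : α → β → α) (ξ : ℕ → Ω → β) (x₀ : Ω → α) : ℕ → Ω → α
  | 0 => x₀
  | n + 1 => fun ω => f (randomIterate f ξ x₀ n ω) (ξ n ω)

section RandomIterate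

variable {Ω α β : Type*} [MeasurableSpace Ω] [MeasurableSpace α] [MeasurableSpace β]
  {P : Measure Ω} {f : α → β → α} {ξ : ℕ → Ω → β} {x₀ : Ω → α}

lemma measurable_randomIterate (hf : Measurable (Function.uncurry f))
    (hξ : ∀ n, Measurable (ξ n)) (hx₀ : Measurable x₀) :
    ∀ n, Measurable (randomIterate f ξ x₀ n)
  | 0 => hx₀
  | n + 1 => hf.comp ((measurable_randomIterate hf hξ hx₀ n).prodMk (hξ n))

lemma indepFun_randomIterate_tail [IsProbabilityMeasure P] (hf : Measurable (Function.uncurry f))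
    (hξ : ∀ n, Measurable (ξ n)) (hx₀ : Measurable x₀)
    (h₀ : IndepFun x₀ (fun ω k => ξ k ω) P)
    (htail : ∀ n, IndepFun (ξ n) (fun ω k => ξ (n + 1 + k) ω) P) :
    ∀ n, IndepFun (randomIterate f ξ x₀ n) (fun ω k => ξ (n + k) ω) P
  | 0 => by simpa only [randomIterate, zero_add] using h₀
  | n + 1 => by
    -- independence from the whole future, not just from `ξ n`, is what survives the induction
    have hX := measurable_randomIterate hf hξ hx₀ n
    have hshift : (fun ω => (ξ n ω, fun k => ξ (n + 1 + k) ω)) =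
        (fun a : ℕ → β => (a 0, fun k => a (k + 1))) ∘ fun ω k => ξ (n + k) ω := by
      funext ω
      simp only [Function.comp_apply, add_zero, add_right_comm n 1]
      rfl
    have hsplit : IndepFun (randomIterate f ξ x₀ n)
        (fun ω => (ξ n ω, fun k => ξ (n + 1 + k) ω)) P := by
      rw [hshift]
      exact (indepFun_randomIterate_tail hf hξ hx₀ h₀ htail n).comp measurable_id
        ((measurable_pi_apply 0).prodMk (measurable_pi_lambda _ fun k => measurable_pi_apply _))
    have hfut : Measurable fun ω k => ξ (n + 1 + k) ω := measurable_pi_lambda _ fun k => hξ _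
    exact (hsplit.prodMk_indepFun hX (hξ n) hfut (htail n)).comp hf measurable_id

lemma indepFun_randomIterate [IsProbabilityMeasure P] (hf : Measurable (Function.uncurry f))
    (hξ : ∀ n, Measurable (ξ n)) (hx₀ : Measurable x₀)
    (h₀ : IndepFun x₀ (fun ω k => ξ k ω) P)
    (htail : ∀ n, IndepFun (ξ n) (fun ω k => ξ (n + 1 + k) ω) P) (n : ℕ) :
    IndepFun (randomIterate f ξ x₀ n) (ξ n) P :=
  (indepFun_randomIterate_tail hf hξ hx₀ h₀ htail n).comp measurable_id (measurable_pi_apply 0)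

end RandomIterate

lemma dist_randomIterate_affine_le {Ω 𝕜 E : Type*} [NontriviallyNormedField 𝕜]
    [SeminormedAddCommGroup E] [NormedSpace 𝕜 E] (ξ : ℕ → Ω → (E →L[𝕜] E) × E) (x₀ y₀ : Ω → E)
    (ω : Ω) : ∀ n, dist (randomIterate (fun x p => p.1 x + p.2) ξ x₀ n ω)
      (randomIterate (fun x p => p.1 x + p.2) ξ y₀ n ω) ≤
      (∏ k ∈ Finset.range n, ‖(ξ k ω).1‖) * dist (x₀ ω) (y₀ ω)
  | 0 => by simp [randomIterate]
  | n + 1 => by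
    set X := randomIterate (fun (x : E) (p : (E →L[𝕜] E) × E) => p.1 x + p.2) ξ x₀
    set Y := randomIterate (fun (x : E) (p : (E →L[𝕜] E) × E) => p.1 x + p.2) ξ y₀
    set a := (ξ n ω).1
    calc dist (a (X n ω) + (ξ n ω).2) (a (Y n ω) + (ξ n ω).2)
        = ‖a (X n ω - Y n ω)‖ := by rw [dist_add_right, dist_eq_norm, map_sub]
      _ ≤ ‖a‖ * dist (X n ω) (Y n ω) := by rw [dist_eq_norm]; exact a.le_opNorm _
      _ ≤ ‖a‖ * ((∏ k ∈ Finset.range n, ‖(ξ k ω).1‖) * dist (x₀ ω) (y₀ ω)) :=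
          mul_le_mul_of_nonneg_left (dist_randomIterate_affine_le ξ x₀ y₀ ω n) (norm_nonneg a)
      _ = (∏ k ∈ Finset.range (n + 1), ‖(ξ k ω).1‖) * dist (x₀ ω) (y₀ ω) := by
          rw [Finset.prod_range_succ]; ring

section AffineRecurrence

variable {E : Type*} [NormedAddCommGroup E] [NormedSpace ℝ E] [FiniteDimensional ℝ E]
  [MeasurableSpace E] [BorelSpace E] [MeasurableSpace (E →L[ℝ] E)] [BorelSpace (E →L[ℝ] E)]

def IsAffineRecurrenceSolution {Ω : Type u} [MeasurableSpace Ω] (P : Measure Ω)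
    (A₁ : Ω → E →L[ℝ] E) (B₁ : Ω → E) (ρ : Measure E) : Prop :=
  ∀ (Ω' : Type u) [MeasurableSpace Ω'] (P' : Measure Ω'), IsProbabilityMeasure P' →
    ∀ (A' : Ω' → E →L[ℝ] E) (B' : Ω' → E) (U : Ω' → E),
      Measurable A' → Measurable B' → Measurable U →
      IdentDistrib (fun ω' => (A' ω', B' ω')) (fun ω => (A₁ ω, B₁ ω)) P' P →
      IndepFun U (fun ω' => (A' ω', B' ω')) P' →
      P'.map U = ρ → P'.map (fun ω' => A' ω' (U ω') + B' ω') = ρ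

lemma measurable_affineApply :
    Measurable (Function.uncurry fun (x : E) (p : (E →L[ℝ] E) × E) => p.1 x + p.2) := by
  fun_prop

lemma IsAffineRecurrenceSolution.map_randomIterate {Ω : Type u} [MeasurableSpace Ω]
    {P : Measure Ω} {A₁ : Ω → E →L[ℝ] E} {B₁ : Ω → E} {ρ : Measure E}
    (hρ : IsAffineRecurrenceSolution P A₁ B₁ ρ) {Ω' : Type u} [MeasurableSpace Ω']
    {P' : Measure Ω'} [IsProbabilityMeasure P'] {ξ : ℕ → Ω' → (E →L[ℝ] E) × E}
    (hξ : ∀ n, Measurable (ξ n)) (hξlaw : ∀ n, IdentDistrib (ξ n) (fun ω => (A₁ ω, B₁ ω)) P' P)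
    (htail : ∀ n, IndepFun (ξ n) (fun ω k => ξ (n + 1 + k) ω) P') {x₀ : Ω' → E}
    (hx₀ : Measurable x₀) (h₀ : IndepFun x₀ (fun ω k => ξ k ω) P') (hlaw₀ : P'.map x₀ = ρ) :
    ∀ n, P'.map (randomIterate (fun x p => p.1 x + p.2) ξ x₀ n) = ρ
  | 0 => hlaw₀
  | n + 1 => hρ Ω' P' inferInstance (fun ω => (ξ n ω).1) (fun ω => (ξ n ω).2) _
      (hξ n).fst (hξ n).snd (measurable_randomIterate measurable_affineApply hξ hx₀ n) (hξlaw n)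
      (indepFun_randomIterate measurable_affineApply hξ hx₀ h₀ htail n)
      (hρ.map_randomIterate hξ hξlaw htail hx₀ h₀ hlaw₀ n)

end AffineRecurrence

theorem fixed_point_distribution_unique_general
    {Ω : Type u} [MeasureSpace Ω] [IsProbabilityMeasure (ℙ : Measure Ω)]
    {q : ℕ}
    [MeasurableSpace (EuclideanSpace ℝ (Fin q) →L[ℝ] EuclideanSpace ℝ (Fin q))]
    [BorelSpace (EuclideanSpace ℝ (Fin q) →L[ℝ] EuclideanSpace ℝ (Fin q))]
    (A : ℕ → Ω → (EuclideanSpace ℝ (Fin q) →L[ℝ] EuclideanSpace ℝ (Fin q)))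
    (B : ℕ → Ω → EuclideanSpace ℝ (Fin q))
    (hAmeas : ∀ k : ℕ, Measurable (A (k + 1)))
    (hBmeas : ∀ k : ℕ, Measurable (B (k + 1)))
    (hiid : iIndepFun
      (fun (k : ℕ) ω => (A (k + 1) ω, B (k + 1) ω)) ℙ)
    (hident : ∀ k : ℕ, IdentDistrib (fun ω => (A (k + 1) ω, B (k + 1) ω))
      (fun ω => (A 1 ω, B 1 ω)) ℙ ℙ)
    (hlogA_int : Integrable (fun ω => Real.log ‖A 1 ω‖) ℙ)
    (hlogA_neg : ∫ ω, Real.log ‖A 1 ω‖ ∂ℙ < 0)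
    (μ ν : Measure (EuclideanSpace ℝ (Fin q)))
    [IsProbabilityMeasure μ] [IsProbabilityMeasure ν]
    (hμ : ∀ (Ω' : Type u) [MeasurableSpace Ω'] (P' : Measure Ω'), IsProbabilityMeasure P' →
      ∀ (A' : Ω' → (EuclideanSpace ℝ (Fin q) →L[ℝ] EuclideanSpace ℝ (Fin q)))
        (B' : Ω' → EuclideanSpace ℝ (Fin q)) (U : Ω' → EuclideanSpace ℝ (Fin q)),
        Measurable A' → Measurable B' → Measurable U →
        IdentDistrib (fun ω' => (A' ω', B' ω')) (fun ω => (A 1 ω, B 1 ω)) P' ℙ →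
        IndepFun U (fun ω' => (A' ω', B' ω')) P' →
        Measure.map U P' = μ →
        Measure.map (fun ω' => A' ω' (U ω') + B' ω') P' = μ)
    (hν : ∀ (Ω' : Type u) [MeasurableSpace Ω'] (P' : Measure Ω'), IsProbabilityMeasure P' →
      ∀ (A' : Ω' → (EuclideanSpace ℝ (Fin q) →L[ℝ] EuclideanSpace ℝ (Fin q)))
        (B' : Ω' → EuclideanSpace ℝ (Fin q)) (U : Ω' → EuclideanSpace ℝ (Fin q)),
        Measurable A' → Measurable B' → Measurable U →
        IdentDistrib (fun ω' => (A' ω', B' ω')) (fun ω => (A 1 ω, B 1 ω)) P' ℙ →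
        IndepFun U (fun ω' => (A' ω', B' ω')) P' →
        Measure.map U P' = ν →
        Measure.map (fun ω' => A' ω' (U ω') + B' ω') P' = ν) :
    μ = ν := by
  set P' := (ℙ : Measure Ω).prod (μ.prod ν)
  have hpair (k : ℕ) : Measurable fun ω => (A (k + 1) ω, B (k + 1) ω) :=
    (hAmeas k).prodMk (hBmeas k)
  set ξ := fun k (p : Ω × (EuclideanSpace ℝ (Fin q) × EuclideanSpace ℝ (Fin q))) =>
    (A (k + 1) p.1, B (k + 1) p.1)
  have hξ (k : ℕ) : Measurable (ξ k) := (hpair k).comp measurable_fst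
  have hξlaw (k : ℕ) : IdentDistrib (ξ k) (fun ω => (A 1 ω, B 1 ω)) P' ℙ :=
    (measurePreserving_fst.identDistrib_comp (hpair k)).trans (hident k)
  have htail (n : ℕ) : IndepFun (ξ n) (fun p k => ξ (n + 1 + k) p) P' :=
    (hiid.indepFun_tail hpair n).comp_measurePreserving measurePreserving_fst (hpair n)
      (measurable_pi_lambda _ fun k => hpair _)
  have hstart : IndepFun (fun p => p.2) (fun p k => ξ k p) P' :=
    (indepFun_prod (measurable_pi_lambda _ hpair) measurable_id).symm
  have hlawU := IsAffineRecurrenceSolution.map_randomIterate (P := ℙ) hμ hξ hξlaw htail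
    measurable_snd.fst (hstart.comp measurable_fst measurable_id)
    (measurePreserving_fst.comp measurePreserving_snd).map_eq
  have hlawV := IsAffineRecurrenceSolution.map_randomIterate (P := ℙ) hν hξ hξlaw htail
    measurable_snd.snd (hstart.comp measurable_snd measurable_id)
    (measurePreserving_snd.comp measurePreserving_snd).map_eq
  refine eq_of_ae_tendsto_dist_zero
    (measurable_randomIterate measurable_affineApply hξ measurable_snd.fst)
    (measurable_randomIterate measurable_affineApply hξ measurable_snd.snd) hlawU hlawV ?_
  have hcontract := ae_tendsto_prod_norm_zero_of_integral_log_neg (M := fun k ω => A (k + 1) ω)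
    (fun i j hij => (hiid.indepFun hij).comp measurable_fst measurable_fst)
    (fun i => ((hident i).trans (hident 0).symm).comp measurable_fst) hlogA_int hlogA_neg
  filter_upwards [Measure.quasiMeasurePreserving_fst.ae hcontract] with p hp
  refine squeeze_zero (fun n => dist_nonneg) (dist_randomIterate_affine_le ξ _ _ p)
    (by simpa using hp.mul_const (dist p.2.1 p.2.2))

/-- Uniqueness of the solution of the distributional fixed-point equation `U ≟ A₁ U + B₁`:
under `E[log ‖A₁‖] < 0` and `E[log⁺ ‖B₁‖] < ∞` there is at most one Borel probability measure
`μ` such that whenever `U` is a random vector with distribution `μ`, independent of a pair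
`(A', B')` distributed as `(A₁, B₁)`, the random vector `A' U + B'` again has distribution
`μ`. -/
theorem fixed_point_distribution_unique
    {Ω : Type u} [MeasureSpace Ω] [IsProbabilityMeasure (ℙ : Measure Ω)]
    {q : ℕ} (hq : 1 ≤ q)
    [MeasurableSpace (EuclideanSpace ℝ (Fin q) →L[ℝ] EuclideanSpace ℝ (Fin q))]
    [BorelSpace (EuclideanSpace ℝ (Fin q) →L[ℝ] EuclideanSpace ℝ (Fin q))]
    (A : ℕ → Ω → (EuclideanSpace ℝ (Fin q) →L[ℝ] EuclideanSpace ℝ (Fin q)))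
    (B : ℕ → Ω → EuclideanSpace ℝ (Fin q))
    (hAmeas : ∀ k : ℕ, Measurable (A (k + 1)))
    (hBmeas : ∀ k : ℕ, Measurable (B (k + 1)))
    (hiid : iIndepFun
      (fun (k : ℕ) ω => (A (k + 1) ω, B (k + 1) ω)) ℙ)
    (hident : ∀ k : ℕ, IdentDistrib (fun ω => (A (k + 1) ω, B (k + 1) ω))
      (fun ω => (A 1 ω, B 1 ω)) ℙ ℙ)
    (hlogA_int : Integrable (fun ω => Real.log ‖A 1 ω‖) ℙ)
    (hlogA_neg : ∫ ω, Real.log ‖A 1 ω‖ ∂ℙ < 0)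
    (hlogB_int : Integrable (fun ω => Real.log (max 1 ‖B 1 ω‖)) ℙ)
    (μ ν : Measure (EuclideanSpace ℝ (Fin q)))
    [IsProbabilityMeasure μ] [IsProbabilityMeasure ν]
    (hμ : ∀ (Ω' : Type u) [MeasurableSpace Ω'] (P' : Measure Ω'), IsProbabilityMeasure P' →
      ∀ (A' : Ω' → (EuclideanSpace ℝ (Fin q) →L[ℝ] EuclideanSpace ℝ (Fin q)))
        (B' : Ω' → EuclideanSpace ℝ (Fin q)) (U : Ω' → EuclideanSpace ℝ (Fin q)),
        Measurable A' → Measurable B' → Measurable U →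
        IdentDistrib (fun ω' => (A' ω', B' ω')) (fun ω => (A 1 ω, B 1 ω)) P' ℙ →
        IndepFun U (fun ω' => (A' ω', B' ω')) P' →
        Measure.map U P' = μ →
        Measure.map (fun ω' => A' ω' (U ω') + B' ω') P' = μ)
    (hν : ∀ (Ω' : Type u) [MeasurableSpace Ω'] (P' : Measure Ω'), IsProbabilityMeasure P' →
      ∀ (A' : Ω' → (EuclideanSpace ℝ (Fin q) →L[ℝ] EuclideanSpace ℝ (Fin q)))
        (B' : Ω' → EuclideanSpace ℝ (Fin q)) (U : Ω' → EuclideanSpace ℝ (Fin q)),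
        Measurable A' → Measurable B' → Measurable U →
        IdentDistrib (fun ω' => (A' ω', B' ω')) (fun ω => (A 1 ω, B 1 ω)) P' ℙ →
        IndepFun U (fun ω' => (A' ω', B' ω')) P' →
        Measure.map U P' = ν →
        Measure.map (fun ω' => A' ω' (U ω') + B' ω') P' = ν) :
    μ = ν :=
  fixed_point_distribution_unique_general A B hAmeas hBmeas hiid hident hlogA_int hlogA_neg μ ν hμ
    hν
end

section
/- Suppose Y_ϱ has the same distribution as Y₀. Then the chain (Y_k)_{k≥0} is strictly periodically stationary with period ϱ: for every n ≥ 1, all indices 0 ≤ k₁ < k₂ < ⋯ < k_n and every m ∈ ℕ, the random vector (Y_{k₁+mϱ}, Y_{k₂+mϱ}, …, Y_{k_n+mϱ}) has the same joint distribution as (Y_{k₁}, Y_{k₂}, …, Y_{k_n}). -/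
/-!
The chain is a measurable function of its start and its driving sequence: `Y = Φ (Y₀, Z)`, and
the chain shifted by `ϱ` is `Φ (Y_ϱ, Z_{ϱ + ·})`. Since `Y_ϱ` only depends on `Y₀` and the first
block of `Z`, it is independent of the later blocks; as the blocks are i.i.d. and `Y_ϱ` has the
law of `Y₀`, the pair `(Y_ϱ, Z_{ϱ + ·})` has the law of `(Y₀, Z)`. Shifting by `ϱ` therefore
preserves the law of the whole chain, and iterating gives the shift by `mϱ`.
-/

open MeasureTheory ProbabilityTheory Function

section Orbit

variable {P E : Type*} (φ : P → E → E)

def orbit (y : E) (z : ℕ → P) : ℕ → E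
  | 0 => y
  | t + 1 => φ (z t) (orbit y z t)

variable {φ}

lemma orbit_congr {z z' : ℕ → P} {t : ℕ} (h : ∀ s < t, z s = z' s) (y : E) :
    orbit φ y z t = orbit φ y z' t := by
  induction t with
  | zero => rfl
  | succ t ih => simp only [orbit, ih fun s hs => h s (by omega), h t t.lt_succ_self]

lemma eq_orbit {x : ℕ → E} {z : ℕ → P} (h : ∀ t, x (t + 1) = φ (z t) (x t)) :
    x = orbit φ (x 0) z := by
  funext t
  induction t with
  | zero => rfl
  | succ t ih => rw [h, ih]; rfl

lemma measurable_orbit [MeasurableSpace P] [MeasurableSpace E] (hφ : Measurable (uncurry φ)) :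
    Measurable (fun p : E × (ℕ → P) => orbit φ p.1 p.2) := by
  refine measurable_pi_lambda _ fun t => ?_
  induction t with
  | zero => exact measurable_fst
  | succ t ih => exact hφ.comp (((measurable_pi_apply t).comp measurable_snd).prodMk ih)

end Orbit

section Blocks

variable {P : Type*} {ϱ : ℕ}

def blocks (ϱ : ℕ) (z : ℕ → P) (j : ℕ) (i : Fin ϱ) : P := z (j * ϱ + i)

def unblock (hϱ : 0 < ϱ) (w : ℕ → Fin ϱ → P) (s : ℕ) : P :=
  w (s / ϱ) ⟨s % ϱ, Nat.mod_lt s hϱ⟩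

lemma unblock_blocks (hϱ : 0 < ϱ) (z : ℕ → P) : unblock hϱ (blocks ϱ z) = z := by
  funext s
  simp [unblock, blocks, Nat.div_add_mod']

lemma blocks_succ (z : ℕ → P) (j : ℕ) :
    blocks ϱ z (j + 1) = blocks ϱ (fun s => z (s + ϱ)) j := by
  funext i
  simp only [blocks]
  congr 1
  ring

lemma unblock_apply_of_lt (hϱ : 0 < ϱ) (w : ℕ → Fin ϱ → P) {s : ℕ} (hs : s < ϱ) :
    unblock hϱ w s = w 0 ⟨s, hs⟩ := by
  simp [unblock, Nat.div_eq_of_lt hs, Nat.mod_eq_of_lt hs]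

lemma orbit_unblock_blocks_zero {E : Type*} {φ : P → E → E} (hϱ : 0 < ϱ) (y : E)
    (z : ℕ → P) : orbit φ y (unblock hϱ fun _ => blocks ϱ z 0) ϱ = orbit φ y z ϱ :=
  orbit_congr (fun s hs => by simp [unblock_apply_of_lt hϱ _ hs, blocks]) y

variable [MeasurableSpace P]

lemma measurable_blocks : Measurable (blocks (P := P) ϱ) := by
  unfold blocks; fun_prop

lemma measurable_unblock (hϱ : 0 < ϱ) : Measurable (unblock (P := P) hϱ) := by
  unfold unblock; fun_prop

end Blocks

namespace ProbabilityTheory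

variable {Ω E F G : Type*} [MeasurableSpace Ω] [MeasurableSpace E] [MeasurableSpace F]
  [MeasurableSpace G] {μ : Measure Ω}

lemma IndepFun.prodMk_left_of_prodMk_right [IsFiniteMeasure μ]
    {X : Ω → E} {V : Ω → F} {U : Ω → G} (hX : Measurable X) (hV : Measurable V) (hU : Measurable U)
    (h : IndepFun X (fun ω => (V ω, U ω)) μ) (hVU : IndepFun V U μ) :
    IndepFun (fun ω => (X ω, V ω)) U μ := by
  have hXV : IndepFun X V μ := h.comp measurable_id measurable_fst
  rw [indepFun_iff_map_prod_eq_prod_map_map (hX.prodMk hV).aemeasurable hU.aemeasurable,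
    hXV.map_prod_eq_prod_map_map hX.aemeasurable hV.aemeasurable]
  calc μ.map (fun ω => ((X ω, V ω), U ω))
      = (μ.map (fun ω => (X ω, (V ω, U ω)))).map MeasurableEquiv.prodAssoc.symm := by
        rw [Measure.map_map MeasurableEquiv.prodAssoc.symm.measurable
          (hX.prodMk (hV.prodMk hU))]
        rfl
    _ = ((μ.map X).prod ((μ.map V).prod (μ.map U))).map MeasurableEquiv.prodAssoc.symm := by
        rw [h.map_prod_eq_prod_map_map hX.aemeasurable (hV.prodMk hU).aemeasurable,
          hVU.map_prod_eq_prod_map_map hV.aemeasurable hU.aemeasurable]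
    _ = ((μ.map X).prod (μ.map V)).prod (μ.map U) :=
        ((measurePreserving_prodAssoc _ _ _).symm MeasurableEquiv.prodAssoc).map_eq

lemma iIndepFun.indepFun_head_tail {f : ℕ → Ω → E} (hf : ∀ i, Measurable (f i))
    (h : iIndepFun f μ) : IndepFun (f 0) (fun ω j => f (j + 1) ω) μ := by
  have hsplit := indep_iSup_of_disjoint (fun i => (hf i).comap_le) h.iIndep
    (S := {0}) (T := {j | j ≠ 0}) (by simp)
  rw [IndepFun_iff_Indep]
  refine indep_of_indep_of_le hsplit (le_iSup₂_of_le 0 rfl le_rfl) ?_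
  simp only [MeasurableSpace.pi, MeasurableSpace.comap_iSup, MeasurableSpace.comap_comp]
  exact iSup_le fun j => le_iSup₂_of_le (j + 1) j.succ_ne_zero le_rfl

lemma IdentDistrib.shift_mul {x : ℕ → Ω → E} {ϱ : ℕ}
    (h : IdentDistrib (fun ω t => x (t + ϱ) ω) (fun ω t => x t ω) μ μ) (m : ℕ) :
    IdentDistrib (fun ω t => x (t + m * ϱ) ω) (fun ω t => x t ω) μ μ := by
  induction m with
  | zero => simpa using IdentDistrib.refl h.aemeasurable_snd
  | succ m ih =>
    have hshift : Measurable fun (y : ℕ → E) t => y (t + ϱ) :=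
      measurable_pi_lambda _ fun t => measurable_pi_apply _
    refine IdentDistrib.trans ?_ h
    simpa only [comp_def, Nat.add_right_comm, Nat.succ_mul, ← Nat.add_assoc] using
      ih.comp hshift

end ProbabilityTheory

section Stationarity

variable {Ω P E β : Type*} [MeasurableSpace Ω] [MeasurableSpace P] [MeasurableSpace E]
  [MeasurableSpace β] {μ : Measure Ω}

lemma identDistrib_prodMk_tail [IsProbabilityMeasure μ] {W : ℕ → Ω → β}
    (hW : ∀ j, Measurable (W j)) (hiid : iIndepFun W μ)
    (hident : ∀ j, IdentDistrib (W (j + 1)) (W j) μ μ)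
    {X₀ X₁ : Ω → E} (hX₀ : Measurable X₀) (hindep : IndepFun X₀ (fun ω j => W j ω) μ)
    {g : E × β → E} (hg : Measurable g) (hX₁ : ∀ ω, X₁ ω = g (X₀ ω, W 0 ω))
    (hstat : IdentDistrib X₁ X₀ μ μ) :
    IdentDistrib (fun ω => (X₁ ω, fun j => W (j + 1) ω)) (fun ω => (X₀ ω, fun j => W j ω))
      μ μ := by
  have htail : Measurable fun ω j => W (j + 1) ω := measurable_pi_lambda _ fun j => hW (j + 1)
  have hhead : IndepFun (fun ω => (X₀ ω, W 0 ω)) (fun ω j => W (j + 1) ω) μ :=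
    (hindep.comp measurable_id ((measurable_pi_apply 0).prodMk
      (measurable_pi_lambda _ fun j => measurable_pi_apply (j + 1)))).prodMk_left_of_prodMk_right
      hX₀ (hW 0) htail (hiid.indepFun_head_tail hW)
  have hX₁indep : IndepFun X₁ (fun ω j => W (j + 1) ω) μ := by
    rw [show X₁ = g ∘ fun ω => (X₀ ω, W 0 ω) from funext hX₁]
    exact hhead.comp hg measurable_id
  exact hstat.prodMk (.pi hident (hiid.precomp Nat.succ_injective) hiid) hX₁indep hindep

lemma identDistrib_shift_of_recursion {φ : P → E → E} (hφ : Measurable (uncurry φ))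
    {x : ℕ → Ω → E} {z : ℕ → Ω → P} (hrec : ∀ t ω, x (t + 1) ω = φ (z t ω) (x t ω)) {c : ℕ}
    (h : IdentDistrib (fun ω => (x c ω, fun s => z (s + c) ω)) (fun ω => (x 0 ω, fun s => z s ω))
      μ μ) :
    IdentDistrib (fun ω t => x (t + c) ω) (fun ω t => x t ω) μ μ := by
  have horbit : ∀ d ω, (fun t => x (t + d) ω) = orbit φ (x d ω) fun s => z (s + d) ω :=
    fun d ω => by
      simpa using eq_orbit (x := fun t => x (t + d) ω) fun t => by
        simpa only [Nat.add_right_comm] using hrec (t + d) ω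
  convert h.comp (measurable_orbit hφ) using 1 <;> funext ω
  · exact horbit c ω
  · simpa using horbit 0 ω

theorem identDistrib_shift_mul_of_blocks_iid [IsProbabilityMeasure μ]
    {φ : P → E → E} (hφ : Measurable (uncurry φ)) {ϱ : ℕ} (hϱ : 0 < ϱ)
    {z : ℕ → Ω → P} (hz : ∀ t, Measurable (z t))
    (hiid : iIndepFun (fun j ω => blocks ϱ (z · ω) j) μ)
    (hident : ∀ j, IdentDistrib (fun ω => blocks ϱ (z · ω) (j + 1))
      (fun ω => blocks ϱ (z · ω) j) μ μ)
    {x : ℕ → Ω → E} (hx₀ : Measurable (x 0)) (hindep : IndepFun (x 0) (fun ω t => z t ω) μ)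
    (hrec : ∀ t ω, x (t + 1) ω = φ (z t ω) (x t ω))
    (hstat : IdentDistrib (x ϱ) (x 0) μ μ) (m : ℕ) :
    IdentDistrib (fun ω t => x (t + m * ϱ) ω) (fun ω t => x t ω) μ μ := by
  have hblocks : Measurable fun ω => blocks ϱ (z · ω) :=
    measurable_blocks.comp (measurable_pi_lambda _ hz)
  have hg : Measurable fun p : E × (Fin ϱ → P) => orbit φ p.1 (unblock hϱ fun _ => p.2) ϱ :=
    (measurable_pi_apply ϱ).comp <| (measurable_orbit hφ).comp <| measurable_fst.prodMk <|
      (measurable_unblock hϱ).comp <| measurable_pi_lambda _ fun _ => measurable_snd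
  have hx_period : ∀ ω, x ϱ ω = orbit φ (x 0 ω) (unblock hϱ fun _ => blocks ϱ (z · ω) 0) ϱ :=
    fun ω => by
      rw [orbit_unblock_blocks_zero]
      exact congrFun (eq_orbit (x := (x · ω)) fun t => hrec t ω) ϱ
  have hpair := identDistrib_prodMk_tail (fun j => (measurable_pi_apply j).comp hblocks) hiid
    hident hx₀ (hindep.comp measurable_id measurable_blocks) hg hx_period hstat
  refine (identDistrib_shift_of_recursion hφ hrec ?_).shift_mul m
  simpa only [comp_def, Prod.map, id, blocks_succ, unblock_blocks] using
    hpair.comp (measurable_id.prodMap (measurable_unblock hϱ))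

end Stationarity

theorem affine_recurrence_periodically_stationary_general
    {Ω : Type*} [MeasureSpace Ω] [IsProbabilityMeasure (ℙ : Measure Ω)]
    {q : ℕ} (ϱ : ℕ) (hϱ : 1 ≤ ϱ)
    [MeasurableSpace (EuclideanSpace ℝ (Fin q) →L[ℝ] EuclideanSpace ℝ (Fin q))]
    [BorelSpace (EuclideanSpace ℝ (Fin q) →L[ℝ] EuclideanSpace ℝ (Fin q))]
    (A : ℕ → Ω → (EuclideanSpace ℝ (Fin q) →L[ℝ] EuclideanSpace ℝ (Fin q)))
    (B : ℕ → Ω → EuclideanSpace ℝ (Fin q))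
    (hAmeas : ∀ k : ℕ, Measurable (A (k + 1)))
    (hBmeas : ∀ k : ℕ, Measurable (B (k + 1)))
    (hblock_iid : iIndepFun
      (fun (j : ℕ) ω (i : Fin ϱ) => (A (j * ϱ + i + 1) ω, B (j * ϱ + i + 1) ω)) ℙ)
    (hblock_ident : ∀ j : ℕ,
      IdentDistrib (fun ω (i : Fin ϱ) => (A (j * ϱ + i + 1) ω, B (j * ϱ + i + 1) ω))
        (fun ω (i : Fin ϱ) => (A (i + 1) ω, B (i + 1) ω)) ℙ ℙ)
    (Y₀ : Ω → EuclideanSpace ℝ (Fin q)) (hY₀meas : Measurable Y₀)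
    (hY₀indep : IndepFun Y₀ (fun ω (k : ℕ) => (A (k + 1) ω, B (k + 1) ω)) ℙ)
    (Y : ℕ → Ω → EuclideanSpace ℝ (Fin q)) (hY0 : Y 0 = Y₀)
    (hYrec : ∀ m : ℕ, Y (m + 1) = fun ω => A (m + 1) ω (Y m ω) + B (m + 1) ω)
    (hstat : IdentDistrib (Y ϱ) (Y 0) ℙ ℙ) :
    ∀ (n : ℕ), 1 ≤ n → ∀ (k : Fin n → ℕ), StrictMono k → ∀ m : ℕ,
      IdentDistrib (fun ω (i : Fin n) => Y (k i + m * ϱ) ω)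
        (fun ω (i : Fin n) => Y (k i) ω) ℙ ℙ := by
  intro n _ k _ m
  have hφ : Measurable fun p : ((EuclideanSpace ℝ (Fin q) →L[ℝ] EuclideanSpace ℝ (Fin q)) ×
      EuclideanSpace ℝ (Fin q)) × EuclideanSpace ℝ (Fin q) => p.1.1 p.2 + p.1.2 := by
    fun_prop
  have hident : ∀ j : ℕ, IdentDistrib
      (fun ω (i : Fin ϱ) => (A ((j + 1) * ϱ + i + 1) ω, B ((j + 1) * ϱ + i + 1) ω))
      (fun ω (i : Fin ϱ) => (A (j * ϱ + i + 1) ω, B (j * ϱ + i + 1) ω)) ℙ ℙ :=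
    fun j => (hblock_ident (j + 1)).trans (hblock_ident j).symm
  have hshift := identDistrib_shift_mul_of_blocks_iid (φ := fun p y => p.1 y + p.2) hφ hϱ
    (fun t => (hAmeas t).prodMk (hBmeas t)) hblock_iid hident (hY0 ▸ hY₀meas) (hY0 ▸ hY₀indep)
    (fun t ω => by rw [hYrec]) hstat m
  exact hshift.comp (measurable_pi_lambda _ fun i => measurable_pi_apply (k i))

/-- If the `ϱ`-blocks `C_j = ((A_{jϱ+1}, B_{jϱ+1}), …, (A_{(j+1)ϱ}, B_{(j+1)ϱ}))` are i.i.d.,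
`Y₀` is independent of the whole sequence, `Y_k = A_k Y_{k-1} + B_k`, and `Y_ϱ` has the same
distribution as `Y₀`, then the chain `(Y_k)` is strictly periodically stationary with period
`ϱ`: for any indices `k₁ < ⋯ < k_n` and any `m`, `(Y_{k₁+mϱ}, …, Y_{k_n+mϱ})` has the same
joint distribution as `(Y_{k₁}, …, Y_{k_n})`. -/
theorem affine_recurrence_periodically_stationary
    {Ω : Type*} [MeasureSpace Ω] [IsProbabilityMeasure (ℙ : Measure Ω)]
    {q : ℕ} (hq : 1 ≤ q) (ϱ : ℕ) (hϱ : 1 ≤ ϱ)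
    [MeasurableSpace (EuclideanSpace ℝ (Fin q) →L[ℝ] EuclideanSpace ℝ (Fin q))]
    [BorelSpace (EuclideanSpace ℝ (Fin q) →L[ℝ] EuclideanSpace ℝ (Fin q))]
    (A : ℕ → Ω → (EuclideanSpace ℝ (Fin q) →L[ℝ] EuclideanSpace ℝ (Fin q)))
    (B : ℕ → Ω → EuclideanSpace ℝ (Fin q))
    (hAmeas : ∀ k : ℕ, Measurable (A (k + 1)))
    (hBmeas : ∀ k : ℕ, Measurable (B (k + 1)))
    (hblock_iid : iIndepFun
      (fun (j : ℕ) ω (i : Fin ϱ) => (A (j * ϱ + i + 1) ω, B (j * ϱ + i + 1) ω)) ℙ)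
    (hblock_ident : ∀ j : ℕ,
      IdentDistrib (fun ω (i : Fin ϱ) => (A (j * ϱ + i + 1) ω, B (j * ϱ + i + 1) ω))
        (fun ω (i : Fin ϱ) => (A (i + 1) ω, B (i + 1) ω)) ℙ ℙ)
    (Y₀ : Ω → EuclideanSpace ℝ (Fin q)) (hY₀meas : Measurable Y₀)
    (hY₀indep : IndepFun Y₀ (fun ω (k : ℕ) => (A (k + 1) ω, B (k + 1) ω)) ℙ)
    (Y : ℕ → Ω → EuclideanSpace ℝ (Fin q)) (hY0 : Y 0 = Y₀)
    (hYrec : ∀ m : ℕ, Y (m + 1) = fun ω => A (m + 1) ω (Y m ω) + B (m + 1) ω)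
    (hstat : IdentDistrib (Y ϱ) (Y 0) ℙ ℙ) :
    ∀ (n : ℕ), 1 ≤ n → ∀ (k : Fin n → ℕ), StrictMono k → ∀ m : ℕ,
      IdentDistrib (fun ω (i : Fin n) => Y (k i + m * ϱ) ω)
        (fun ω (i : Fin n) => Y (k i) ω) ℙ ℙ :=
  affine_recurrence_periodically_stationary_general ϱ hϱ A B hAmeas hBmeas hblock_iid hblock_ident
    Y₀ hY₀meas hY₀indep Y hY0 hYrec hstat
end

section
/- Let γ ≥ −α₀ be a real constant. Assume that aᵀ exp(tB) e ≥ 0 for all t ≥ 0, and that aᵀ exp(tB) y₀ ≥ γ for all t ≥ 0. Then for every n ≥ 0 and every t ≥ 0, aᵀ exp(tB) y_n ≥ γ; in particular the volatility values satisfy α₀ + aᵀ exp(tB) y_n ≥ α₀ + γ ≥ 0 for all n ≥ 0 and t ≥ 0. -/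
open Matrix

/-! Write `φ_v(t) = aᵀ exp(tB) v`. By the semigroup property of `t ↦ exp(tB)`, a jump
`v ↦ exp(ΔB) v + c e` turns `φ_v` into `t ↦ φ_v(t + Δ) + c φ_e(t)`. Hence the lower bound
`φ_v ≥ γ` on `[0, ∞)` is preserved as long as `Δ ≥ 0` and `c ≥ 0`; for the recursion
`c = (α₀ + φ_{y_n}(Δ)) z² ≥ (α₀ + γ) z² ≥ 0` by the bound itself, so induction on `n` applies. -/

theorem Matrix.exp_add_smul {m 𝕂 : Type*} [Fintype m] [DecidableEq m] [RCLike 𝕂]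
    (s t : 𝕂) (A : Matrix m m 𝕂) :
    NormedSpace.exp ((s + t) • A) = NormedSpace.exp (s • A) * NormedSpace.exp (t • A) := by
  rw [add_smul, Matrix.exp_add_of_commute]
  exact ((Commute.refl A).smul_left s).smul_right t

section FreeResponse

variable {ι : Type*} [Fintype ι] [DecidableEq ι] (B : Matrix ι ι ℝ) (a : ι → ℝ)

noncomputable def freeResponse (v : ι → ℝ) (t : ℝ) : ℝ :=
  a ⬝ᵥ (NormedSpace.exp (t • B) *ᵥ v)

theorem freeResponse_jump (v e : ι → ℝ) (Δ c t : ℝ) :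
    freeResponse B a (NormedSpace.exp (Δ • B) *ᵥ v + c • e) t =
      freeResponse B a v (t + Δ) + c * freeResponse B a e t := by
  simp only [freeResponse, mulVec_add, mulVec_mulVec, mulVec_smul, dotProduct_add,
    dotProduct_smul, smul_eq_mul, Matrix.exp_add_smul]

theorem le_freeResponse_jump {v e : ι → ℝ} {γ Δ c : ℝ}
    (hv : ∀ t, 0 ≤ t → γ ≤ freeResponse B a v t) (he : ∀ t, 0 ≤ t → 0 ≤ freeResponse B a e t)
    (hΔ : 0 ≤ Δ) (hc : 0 ≤ c) {t : ℝ} (ht : 0 ≤ t) :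
    γ ≤ freeResponse B a (NormedSpace.exp (Δ • B) *ᵥ v + c • e) t := by
  rw [freeResponse_jump]
  exact le_add_of_le_of_nonneg (hv _ (add_nonneg ht hΔ)) (mul_nonneg hc (he t ht))

end FreeResponse

theorem volatility_nonneg_general
    {q : ℕ} (B : Matrix (Fin q) (Fin q) ℝ) (a e : Fin q → ℝ)
    (α₀ : ℝ) (γ : ℝ) (hγ : -α₀ ≤ γ)
    (υ : ℕ → ℝ) (hυmono : StrictMono υ) (z : ℕ → ℝ)
    (y : ℕ → Fin q → ℝ)
    (hrec : ∀ n : ℕ, y (n + 1) =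
      (NormedSpace.exp ((υ (n + 1) - υ n) • B)) *ᵥ (y n) +
        ((α₀ + a ⬝ᵥ ((NormedSpace.exp ((υ (n + 1) - υ n) • B)) *ᵥ (y n))) *
          (z (n + 1)) ^ 2) • e)
    (h1 : ∀ t : ℝ, 0 ≤ t → 0 ≤ a ⬝ᵥ ((NormedSpace.exp (t • B)) *ᵥ e))
    (h2 : ∀ t : ℝ, 0 ≤ t → γ ≤ a ⬝ᵥ ((NormedSpace.exp (t • B)) *ᵥ (y 0))) :
    ∀ (n : ℕ) (t : ℝ), 0 ≤ t →
      γ ≤ a ⬝ᵥ ((NormedSpace.exp (t • B)) *ᵥ (y n)) ∧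
        0 ≤ α₀ + γ ∧
        α₀ + γ ≤ α₀ + a ⬝ᵥ ((NormedSpace.exp (t • B)) *ᵥ (y n)) := by
  have bound : ∀ n, ∀ t, 0 ≤ t → γ ≤ freeResponse B a (y n) t := by
    intro n
    induction n with
    | zero => exact h2
    | succ n ih =>
      have hΔ : 0 ≤ υ (n + 1) - υ n := sub_nonneg.mpr (hυmono.monotone n.le_succ)
      have hc : 0 ≤ (α₀ + freeResponse B a (y n) (υ (n + 1) - υ n)) * z (n + 1) ^ 2 :=
        mul_nonneg (by linarith [ih _ hΔ]) (sq_nonneg _)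
      rw [hrec n]
      exact fun t ht ↦ le_freeResponse_jump B a ih h1 hΔ hc ht
  intro n t ht
  have hn := bound n t ht
  exact ⟨hn, by linarith, add_le_add_right hn α₀⟩

/-- Nonnegativity of the SS-COGARCH volatility (sufficiency direction of Theorem 3.3):
if `γ ≥ -α₀`, `aᵀ exp(tB) e ≥ 0` for all `t ≥ 0`, and `aᵀ exp(tB) y₀ ≥ γ` for all `t ≥ 0`,
then along the jump recursion
`y_{n+1} = exp(Δ_{n+1} B) y_n + (α₀ + aᵀ exp(Δ_{n+1} B) y_n) z_{n+1}² e`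
one has `aᵀ exp(tB) y_n ≥ γ` for all `n` and `t ≥ 0`; in particular the volatility values
satisfy `α₀ + aᵀ exp(tB) y_n ≥ α₀ + γ ≥ 0`. -/
theorem volatility_nonneg
    {q : ℕ} (hq : 1 ≤ q) (B : Matrix (Fin q) (Fin q) ℝ) (a e : Fin q → ℝ)
    (α₀ : ℝ) (hα₀ : 0 < α₀) (γ : ℝ) (hγ : -α₀ ≤ γ)
    (υ : ℕ → ℝ) (hυ0 : υ 0 = 0) (hυmono : StrictMono υ) (z : ℕ → ℝ)
    (y : ℕ → Fin q → ℝ)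
    (hrec : ∀ n : ℕ, y (n + 1) =
      (NormedSpace.exp ((υ (n + 1) - υ n) • B)) *ᵥ (y n) +
        ((α₀ + a ⬝ᵥ ((NormedSpace.exp ((υ (n + 1) - υ n) • B)) *ᵥ (y n))) *
          (z (n + 1)) ^ 2) • e)
    (h1 : ∀ t : ℝ, 0 ≤ t → 0 ≤ a ⬝ᵥ ((NormedSpace.exp (t • B)) *ᵥ e))
    (h2 : ∀ t : ℝ, 0 ≤ t → γ ≤ a ⬝ᵥ ((NormedSpace.exp (t • B)) *ᵥ (y 0))) :
    ∀ (n : ℕ) (t : ℝ), 0 ≤ t →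
      γ ≤ a ⬝ᵥ ((NormedSpace.exp (t • B)) *ᵥ (y n)) ∧
        0 ≤ α₀ + γ ∧
        α₀ + γ ≤ α₀ + a ⬝ᵥ ((NormedSpace.exp (t • B)) *ᵥ (y n)) :=
  volatility_nonneg_general B a e α₀ γ hγ υ hυmono z y hrec h1 h2
end
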